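/- Let X be a finite set with |X| ≥ 3 and let λ, ρ : X → X be commuting bijections; define r : X × X → X × X by r(x,y) = (λ(y), ρ(x)). Then (X,r) is a simple solution if and only if there exist a prime p, a bijection φ : X → ℤ/pℤ, and elements a, b ∈ ℤ/pℤ with (a,b) ≠ (0,0) such that for all x, y ∈ X one has (φ × φ)(r(x,y)) = (φ(y) + a, φ(x) + b). -/

import Mathlib

/-- The map `r × id` on `X × X × X`. -/
def r12 {X : Type} (r : X × X → X × X) : X × X × X → X × X × X :=
  fun p => ((r (p.1, p.2.1)).1, (r (p.1, p.2.1)).2, p.2.2)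

/-- The map `id × r` on `X × X × X`. -/
def r23 {X : Type} (r : X × X → X × X) : X × X × X → X × X × X :=
  fun p => (p.1, r p.2)

/-- `r` satisfies the braid equation, i.e. `(X, r)` is a set-theoretic solution of the
Yang--Baxter equation. -/
def IsBraided {X : Type} (r : X × X → X × X) : Prop :=
  (r12 r) ∘ (r23 r) ∘ (r12 r) = (r23 r) ∘ (r12 r) ∘ (r23 r)

/-- The map `λ_x`, where `r (x, y) = (λ_x y, ρ_y x)`. -/
def lambdaMap {X : Type} (r : X × X → X × X) (x : X) : X → X := fun y => (r (x, y)).1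

/-- The map `ρ_y`, where `r (x, y) = (λ_x y, ρ_y x)`. -/
def rhoMap {X : Type} (r : X × X → X × X) (y : X) : X → X := fun x => (r (x, y)).2

/-- A solution is non-degenerate if all `λ_x` and all `ρ_y` are bijective. -/
def Nondegenerate {X : Type} (r : X × X → X × X) : Prop :=
  (∀ x, Function.Bijective (lambdaMap r x)) ∧ (∀ y, Function.Bijective (rhoMap r y))

/-- A homomorphism of solutions `f : (X, r) → (Y, s)`: `(f × f) ∘ r = s ∘ (f × f)`. -/
def IsSolHom {X Y : Type} (r : X × X → X × X) (s : Y × Y → Y × Y) (f : X → Y) : Prop :=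
  ∀ x y : X, Prod.map f f (r (x, y)) = s (f x, f y)

/-- A solution `(X, r)` is simple if `|X| ≥ 2` and every epimorphism of solutions from
`(X, r)` is either bijective or has image of cardinality `1`. -/
def SimpleSolution (X : Type) (r : X × X → X × X) : Prop :=
  2 ≤ Nat.card X ∧
  ∀ (Y : Type) (s : Y × Y → Y × Y) (f : X → Y),
    IsBraided s → Function.Surjective f → IsSolHom r s f →
    Function.Bijective f ∨ Nat.card Y = 1

/-- The derived map `σ_y (x) = λ_y (ρ_{λ_x⁻¹ y} (x))` of a non-degenerate solution. -/
noncomputable def sigmaMap {X : Type} [Nonempty X] (r : X × X → X × X) (y x : X) : X :=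
  lambdaMap r y (rhoMap r (Function.invFun (lambdaMap r x) y) x)

/-- The diagonal map `q (x) = λ_x⁻¹ (x)` of a non-degenerate solution. -/
noncomputable def diagMap {X : Type} [Nonempty X] (r : X × X → X × X) (x : X) : X :=
  Function.invFun (lambdaMap r x) x

/-- A non-degenerate solution is irretractable if `λ_x = λ_y` and `ρ_x = ρ_y` imply `x = y`. -/
def Irretractable {X : Type} (r : X × X → X × X) : Prop :=
  ∀ x y : X, lambdaMap r x = lambdaMap r y → rhoMap r x = rhoMap r y → x = y

/-- A solution is decomposable if `X` is a disjoint union of two non-empty invariant subsets. -/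
def Decomposable {X : Type} (r : X × X → X × X) : Prop :=
  ∃ Y Z : Set X, Y.Nonempty ∧ Z.Nonempty ∧ Disjoint Y Z ∧ Y ∪ Z = Set.univ ∧
    (∀ x y, x ∈ Y → y ∈ Y → (r (x, y)).1 ∈ Y ∧ (r (x, y)).2 ∈ Y) ∧
    (∀ x y, x ∈ Z → y ∈ Z → (r (x, y)).1 ∈ Z ∧ (r (x, y)).2 ∈ Z)

lemma braided_of_comm {Y : Type} (f g : Y → Y) (h : ∀ y, f (g y) = g (f y)) :
    IsBraided (fun p : Y × Y => (f p.2, g p.1)) := by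
  funext p
  obtain ⟨x, y, z⟩ := p
  simp [r12, r23, IsBraided, Function.comp, h]

lemma congruence_trivial {X : Type} (lam rho : Equiv.Perm X)
    (hc : ∀ x, lam (rho x) = rho (lam x))
    (r : X × X → X × X) (hr : ∀ x y : X, r (x, y) = (lam y, rho x))
    (hs : SimpleSolution X r)
    (E : Setoid X) (hlam : ∀ x y, E.r x y → E.r (lam x) (lam y))
    (hrho : ∀ x y, E.r x y → E.r (rho x) (rho y)) :
    (∀ x y, E.r x y → x = y) ∨ (∀ x y, E.r x y) := by
  letI := E
  let lam' : Quotient E → Quotient E := Quotient.map lam hlam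
  let rho' : Quotient E → Quotient E := Quotient.map rho hrho
  let s : Quotient E × Quotient E → Quotient E × Quotient E := fun p => (lam' p.2, rho' p.1)
  have hb : IsBraided s := by
    apply braided_of_comm
    intro q
    induction q using Quotient.ind
    simp only [lam', rho', Quotient.map_mk, hc]
  have hhom : IsSolHom r s (Quotient.mk E) := by
    intro x y
    rw [hr]
    show (⟦lam y⟧, ⟦rho x⟧) = (lam' ⟦y⟧, rho' ⟦x⟧)
    simp [lam', rho', Quotient.map_mk]
  rcases hs.2 (Quotient E) s (Quotient.mk E) hb Quotient.mk_surjective hhom with hbij | hcard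
  · left; intro x y hxy; exact hbij.1 (Quotient.sound hxy)
  · right; intro x y
    have hsub : Subsingleton (Quotient E) := (Nat.card_eq_one_iff_unique.mp hcard).1
    exact Quotient.exact (Subsingleton.elim _ _)

lemma trivial_not_simple {X : Type} [Fintype X] (hX : 3 ≤ Fintype.card X)
    (lam rho : Equiv.Perm X)
    (hc : ∀ x, lam (rho x) = rho (lam x))
    (r : X × X → X × X) (hr : ∀ x y : X, r (x, y) = (lam y, rho x))
    (hlam1 : ∀ x, lam x = x) (hrho1 : ∀ x, rho x = x)
    (hs : SimpleSolution X r) : False := by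
  obtain ⟨x0, x1, x2, h01, h02, h12⟩ := (Fintype.two_lt_card_iff (α := X)).mp (by omega)
  let E : Setoid X := ⟨fun x y => (x = x0) = (y = x0), by
    constructor
    · intro x; rfl
    · intro x y h; exact h.symm
    · intro x y z h1 h2; exact h1.trans h2⟩
  have hE : ∀ x y : X, E.r x y ↔ ((x = x0) = (y = x0)) := fun _ _ => Iff.rfl
  rcases congruence_trivial lam rho hc r hr hs E
      (fun x y h => by simpa [hE, hlam1] using h)
      (fun x y h => by simpa [hE, hrho1] using h) with h | h
  · have : x1 = x2 := h x1 x2 (by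
      rw [hE]
      simp [h01.symm ∘ Eq.symm, h02.symm ∘ Eq.symm]
      tauto)
    exact h12 this
  · have := h x0 x1
    rw [hE] at this
    simp at this
    exact h01 this.symm

lemma closure_pair_comm {Gp : Type*} [Group Gp] (a b : Gp) (hab : a * b = b * a) :
    ∀ g ∈ Subgroup.closure ({a, b} : Set Gp), ∀ k ∈ Subgroup.closure ({a, b} : Set Gp),
      Commute g k := by
  have hCG : ∀ g ∈ Subgroup.closure ({a, b} : Set Gp), Commute a g ∧ Commute b g := by
    intro g hg
    induction hg using Subgroup.closure_induction with
    | mem x hx =>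
      rcases hx with hx | hx
      · subst hx; exact ⟨Commute.refl x, Commute.symm hab⟩
      · subst hx; exact ⟨hab, Commute.refl x⟩
    | one => exact ⟨Commute.one_right _, Commute.one_right _⟩
    | mul x y hx hy ihx ihy =>
      exact ⟨ihx.1.mul_right ihy.1, ihx.2.mul_right ihy.2⟩
    | inv x hx ih => exact ⟨ih.1.inv_right, ih.2.inv_right⟩
  intro g hg
  induction hg using Subgroup.closure_induction with
  | mem x hx =>
    intro h hh
    rcases hx with hx | hx
    · subst hx; exact (hCG h hh).1
    · subst hx; exact (hCG h hh).2
  | one => intro h hh; exact Commute.one_left _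
  | mul x y hx hy ihx ihy => intro h hh; exact (ihx h hh).mul_left (ihy h hh)
  | inv x hx ih => intro h hh; exact (ih h hh).inv_left

lemma forward_dir {X : Type} [Fintype X] (hX : 3 ≤ Fintype.card X)
    (lam rho : Equiv.Perm X) (hcomm : lam * rho = rho * lam)
    (r : X × X → X × X) (hr : ∀ x y : X, r (x, y) = (lam y, rho x))
    (hs : SimpleSolution X r) :
    ∃ (p : ℕ), p.Prime ∧ ∃ (φ : X ≃ ZMod p) (a b : ZMod p), (a, b) ≠ (0, 0) ∧
      ∀ x y : X, Prod.map φ φ (r (x, y)) = (φ y + a, φ x + b) := by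
  classical
  have hc : ∀ x, lam (rho x) = rho (lam x) := by
    intro x
    have := Equiv.ext_iff.mp hcomm x
    simpa [Equiv.Perm.mul_apply] using this
  set G : Subgroup (Equiv.Perm X) := Subgroup.closure {lam, rho} with hGdef
  have hlamG : lam ∈ G := Subgroup.subset_closure (by simp)
  have hrhoG : rho ∈ G := Subgroup.subset_closure (by simp)
  have hGG : ∀ g ∈ G, ∀ h ∈ G, Commute g h := closure_pair_comm lam rho hcomm
  have happ : ∀ g h : Equiv.Perm X, Commute g h → ∀ x, g (h x) = h (g x) := by
    intro g h hgh x
    have := Equiv.ext_iff.mp hgh x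
    simpa [Equiv.Perm.mul_apply] using this
  -- a helper: subgroup-orbit setoids
  have horb : ∀ H : Subgroup (Equiv.Perm X), H ≤ G →
      (∀ h ∈ H, ∀ x, h x = x) ∨ (∀ x y : X, ∃ h ∈ H, h x = y) := by
    intro H hHG
    let E : Setoid X := ⟨fun x y => ∃ h ∈ H, h x = y, by
      constructor
      · intro x; exact ⟨1, one_mem H, rfl⟩
      · rintro x y ⟨h, hh, rfl⟩
        exact ⟨h⁻¹, inv_mem hh, Equiv.symm_apply_apply h x⟩
      · rintro x y z ⟨h, hh, rfl⟩ ⟨k, hk, rfl⟩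
        exact ⟨k * h, mul_mem hk hh, rfl⟩⟩
    have hpres : ∀ (t : Equiv.Perm X), t ∈ G → ∀ x y, E.r x y → E.r (t x) (t y) := by
      rintro t ht x y ⟨h, hh, rfl⟩
      exact ⟨h, hh, happ h t (hGG h (hHG hh) t ht) x⟩
    rcases congruence_trivial lam rho hc r hr hs E (hpres lam hlamG) (hpres rho hrhoG)
      with h | h
    · left
      intro h' hh' x
      exact (h x (h' x) ⟨h', hh', rfl⟩).symm
    · right
      intro x y; exact h x y
  -- transitivity of G
  have htrans : ∀ x y : X, ∃ g ∈ G, g x = y := by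
    rcases horb G le_rfl with h | h
    · exfalso
      exact trivial_not_simple hX lam rho hc r hr (h lam hlamG) (h rho hrhoG) hs
    · exact h
  have hne : Nonempty X := by
    have : 0 < Fintype.card X := by omega
    exact Fintype.card_pos_iff.mp this
  obtain ⟨x0⟩ := hne
  -- regularity
  have hreg : ∀ g ∈ G, ∀ h ∈ G, g x0 = h x0 → g = h := by
    intro g hg h hh hx
    ext y
    obtain ⟨k, hk, rfl⟩ := htrans x0 y
    calc g (k x0) = k (g x0) := happ g k (hGG g hg k hk) x0
    _ = k (h x0) := by rw [hx]
    _ = h (k x0) := (happ h k (hGG h hh k hk) x0).symm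
  have hcardG : Nat.card G = Nat.card X := by
    apply Nat.card_eq_of_bijective (fun g : G => (g : Equiv.Perm X) x0)
    constructor
    · rintro ⟨g, hg⟩ ⟨h, hh⟩ hx
      exact Subtype.ext (hreg g hg h hh hx)
    · intro y
      obtain ⟨g, hg, hgy⟩ := htrans x0 y
      exact ⟨⟨g, hg⟩, hgy⟩
  -- G contains an element of prime order generating everything
  letI : Fintype ↥G := Fintype.ofFinite _
  have hcard2 : 2 ≤ Fintype.card ↥G := by
    rw [← Nat.card_eq_fintype_card, hcardG, Nat.card_eq_fintype_card]; omega
  set q := Fintype.card ↥G |>.minFac with hqdef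
  have hqp : q.Prime := Nat.minFac_prime (by omega)
  haveI : Fact q.Prime := ⟨hqp⟩
  haveI : NeZero q := ⟨hqp.ne_zero⟩
  obtain ⟨g, hgq⟩ := exists_prime_orderOf_dvd_card (G := ↥G) q (Nat.minFac_dvd _)
  set u : Equiv.Perm X := (g : Equiv.Perm X) with hu
  have huG : u ∈ G := g.2
  have huord : orderOf u = q := by
    rw [← hgq]
    exact orderOf_injective G.subtype (Subgroup.subtype_injective G) g
  have hHle : Subgroup.zpowers u ≤ G := (Subgroup.zpowers_le).mpr huG
  have hHcard : Nat.card (Subgroup.zpowers u) = q := by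
    rw [Nat.card_zpowers, huord]
  have hHG : Subgroup.zpowers u = G := by
    rcases horb _ hHle with h | h
    · exfalso
      have hu1 : u = 1 := Equiv.ext fun x => h u (Subgroup.mem_zpowers u) x
      rw [hu1, orderOf_one] at huord
      exact hqp.one_lt.ne huord
    · have hinj : Function.Injective
          (fun h : Subgroup.zpowers u => (h : Equiv.Perm X) x0) := by
        rintro ⟨h1, hh1⟩ ⟨h2, hh2⟩ hx
        exact Subtype.ext (hreg h1 (hHle hh1) h2 (hHle hh2) hx)
      have hsurj : Function.Surjective
          (fun h : Subgroup.zpowers u => (h : Equiv.Perm X) x0) := by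
        intro y; obtain ⟨h', hh', hy⟩ := h x0 y; exact ⟨⟨h', hh'⟩, hy⟩
      have hcc : Nat.card (Subgroup.zpowers u) = Nat.card X :=
        Nat.card_eq_of_bijective _ ⟨hinj, hsurj⟩
      exact Subgroup.eq_of_le_of_card_ge hHle (by rw [hcc, ← hcardG])
  have hqX : q = Nat.card X := by rw [← hHcard, hHG, hcardG]
  refine ⟨q, hqp, ?_⟩
  -- zpow congruences
  have hziff : ∀ s t : ℤ, ((s : ZMod q) = (t : ZMod q)) ↔ u ^ s = u ^ t := by
    intro s t
    constructor
    · intro hst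
      have hdvd : (q : ℤ) ∣ s - t := by
        rwa [← ZMod.intCast_zmod_eq_zero_iff_dvd, Int.cast_sub, sub_eq_zero]
      have h1 : u ^ (s - t) = 1 := orderOf_dvd_iff_zpow_eq_one.mp (by rw [huord]; exact hdvd)
      rw [zpow_sub] at h1
      exact mul_inv_eq_one.mp h1
    · intro hst
      have h1 : u ^ (s - t) = 1 := by rw [zpow_sub, hst, mul_inv_cancel]
      have hdvd : (q : ℤ) ∣ s - t := by
        rw [← huord]; exact orderOf_dvd_iff_zpow_eq_one.mpr h1
      rw [← sub_eq_zero, ← Int.cast_sub, ZMod.intCast_zmod_eq_zero_iff_dvd]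
      exact hdvd
  have hvaln : ∀ k : ZMod q, (((k.val : ℕ) : ZMod q)) = k := fun k =>
    ZMod.natCast_rightInverse k
  have hval : ∀ k : ZMod q, (((k.val : ℤ) : ZMod q)) = k := by
    intro k
    rw [Int.cast_natCast]
    exact hvaln k
  set ψ : ZMod q → X := fun k => (u ^ (k.val : ℤ)) x0 with hψ
  obtain ⟨mz, hm⟩ := Subgroup.mem_zpowers_iff.mp (hHG ▸ hlamG)
  obtain ⟨nz, hn⟩ := Subgroup.mem_zpowers_iff.mp (hHG ▸ hrhoG)
  set a : ZMod q := ((mz : ℤ) : ZMod q) with ha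
  set b : ZMod q := ((nz : ℤ) : ZMod q) with hb
  have hψadd : ∀ (k : ZMod q) (t : ℤ), (u ^ t) (ψ k) = ψ (k + (t : ZMod q)) := by
    intro k t
    show (u ^ t) ((u ^ (k.val : ℤ)) x0) = (u ^ (((k + (t : ZMod q)).val : ℤ))) x0
    rw [← Equiv.Perm.mul_apply, ← zpow_add]
    congr 1
    apply (hziff _ _).mp
    push_cast
    rw [hvaln, hvaln]
    ring
  have hψbij : Function.Bijective ψ := by
    rw [Fintype.bijective_iff_injective_and_card]
    constructor
    · intro k j hkj
      have h1 : u ^ (k.val : ℤ) = u ^ (j.val : ℤ) :=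
        hreg _ (zpow_mem huG _) _ (zpow_mem huG _) hkj
      have := (hziff _ _).mpr h1
      rwa [hval, hval] at this
    · rw [ZMod.card, hqX, Nat.card_eq_fintype_card]
  set e : ZMod q ≃ X := Equiv.ofBijective ψ hψbij with he
  refine ⟨e.symm, a, b, ?_, ?_⟩
  · intro hab0
    rw [Prod.mk.injEq] at hab0
    have hlam1 : lam = 1 := by
      rw [← hm]
      have : u ^ mz = u ^ (0 : ℤ) := (hziff _ _).mp (by rw [Int.cast_zero, ← ha]; exact hab0.1)
      simpa using this
    have hrho1 : rho = 1 := by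
      rw [← hn]
      have : u ^ nz = u ^ (0 : ℤ) := (hziff _ _).mp (by rw [Int.cast_zero, ← hb]; exact hab0.2)
      simpa using this
    exact trivial_not_simple hX lam rho hc r hr
      (fun x => by rw [hlam1]; rfl) (fun x => by rw [hrho1]; rfl) hs
  · intro x y
    rw [hr]
    have hψe : ∀ k, e k = ψ k := fun k => rfl
    have hcomp1 : ∀ z : X, lam z = e (e.symm z + a) := by
      intro z
      rw [hψe, ← hψadd (e.symm z) mz, hm]
      congr 1
      show z = e (e.symm z)
      rw [Equiv.apply_symm_apply]
    have hcomp2 : ∀ z : X, rho z = e (e.symm z + b) := by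
      intro z
      rw [hψe, ← hψadd (e.symm z) nz, hn]
      congr 1
      show z = e (e.symm z)
      rw [Equiv.apply_symm_apply]
    show (e.symm (lam y), e.symm (rho x)) = (e.symm y + a, e.symm x + b)
    rw [hcomp1 y, hcomp2 x, Equiv.symm_apply_apply, Equiv.symm_apply_apply]


lemma reverse_dir {X : Type} [Fintype X] (hX : 3 ≤ Fintype.card X)
    (lam rho : Equiv.Perm X)
    (r : X × X → X × X) (hr : ∀ x y : X, r (x, y) = (lam y, rho x))
    (p : ℕ) (hp : p.Prime) (φ : X ≃ ZMod p) (a b : ZMod p)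
    (hab : (a, b) ≠ (0, 0))
    (hform : ∀ x y : X, Prod.map φ φ (r (x, y)) = (φ y + a, φ x + b)) :
    SimpleSolution X r := by
  classical
  haveI : Fact p.Prime := ⟨hp⟩
  haveI : NeZero p := ⟨hp.ne_zero⟩
  have hne : Nonempty X := Fintype.card_pos_iff.mp (by omega)
  obtain ⟨x0⟩ := hne
  have hvaln : ∀ k : ZMod p, (((k.val : ℕ) : ZMod p)) = k := fun k =>
    ZMod.natCast_rightInverse k
  have hform' : ∀ x y : X, φ (lam y) = φ y + a ∧ φ (rho x) = φ x + b := by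
    intro x y
    have := hform x y
    rw [hr] at this
    exact ⟨congrArg Prod.fst this, congrArg Prod.snd this⟩
  have hlamf : ∀ y, lam y = φ.symm (φ y + a) := fun y => by
    rw [← (hform' x0 y).1, Equiv.symm_apply_apply]
  have hrhof : ∀ x, rho x = φ.symm (φ x + b) := fun x => by
    rw [← (hform' x x0).2, Equiv.symm_apply_apply]
  constructor
  · rw [Nat.card_eq_fintype_card]; omega
  intro Y s f _hb hsurj hhom
  let T : ZMod p → X → X := fun t x => φ.symm (φ x + t)
  have hT0 : ∀ x, T 0 x = x := fun x => by simp [T]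
  have hTT : ∀ t t' x, T t (T t' x) = T (t' + t) x := fun t t' x => by
    simp [T, Equiv.apply_symm_apply, add_assoc]
  have hsol : ∀ x y : X, f (lam y) = (s (f x, f y)).1 ∧ f (rho x) = (s (f x, f y)).2 := by
    intro x y
    have := hhom x y
    rw [hr] at this
    exact ⟨congrArg Prod.fst this, congrArg Prod.snd this⟩
  have hinvlam : ∀ x x', f x = f x' → f (lam x) = f (lam x') := by
    intro x x' h
    rw [(hsol x0 x).1, (hsol x0 x').1, h]
  have hinvrho : ∀ x x', f x = f x' → f (rho x) = f (rho x') := by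
    intro x x' h
    rw [(hsol x x0).2, (hsol x' x0).2, h]
  obtain ⟨c, hc0, hinvc⟩ : ∃ c : ZMod p, c ≠ 0 ∧
      ∀ x x', f x = f x' → f (T c x) = f (T c x') := by
    by_cases ha0 : a = 0
    · have hb0 : b ≠ 0 := fun hb0 => hab (by rw [ha0, hb0])
      refine ⟨b, hb0, fun x x' h => ?_⟩
      show f (φ.symm (φ x + b)) = f (φ.symm (φ x' + b))
      rw [← hrhof, ← hrhof]
      exact hinvrho x x' h
    · refine ⟨a, ha0, fun x x' h => ?_⟩
      show f (φ.symm (φ x + a)) = f (φ.symm (φ x' + a))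
      rw [← hlamf, ← hlamf]
      exact hinvlam x x' h
  have hmul : ∀ (n : ℕ) (x x' : X), f x = f x' → f (T (n • c) x) = f (T (n • c) x') := by
    intro n
    induction n with
    | zero => intro x x' h; simpa [zero_nsmul, hT0] using h
    | succ n ih =>
      intro x x' h
      have hstep : ∀ z, T ((n + 1) • c) z = T c (T (n • c) z) := fun z => by
        rw [hTT, succ_nsmul]
      rw [hstep, hstep]
      exact hinvc _ _ (ih x x' h)
  have hgen : ∀ (d : ZMod p), d ≠ 0 → ∀ t : ZMod p, ∃ n : ℕ, (n • d : ZMod p) = t := by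
    intro d hd0 t
    refine ⟨(t * d⁻¹).val, ?_⟩
    rw [nsmul_eq_mul, hvaln, mul_assoc, inv_mul_cancel₀ hd0, mul_one]
  have hall : ∀ (t : ZMod p) (x x' : X), f x = f x' → f (T t x) = f (T t x') := by
    intro t x x' h
    obtain ⟨n, hn⟩ := hgen c hc0 t
    rw [← hn]
    exact hmul n x x' h
  by_cases hinj : Function.Injective f
  · exact Or.inl ⟨hinj, hsurj⟩
  · right
    rw [Function.not_injective_iff] at hinj
    obtain ⟨x, x', hfxx, hxx⟩ := hinj
    set t0 : ZMod p := φ x' - φ x with ht0def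
    have ht0 : t0 ≠ 0 := by
      intro h
      rw [ht0def, sub_eq_zero] at h
      exact hxx (φ.injective h.symm)
    have hx' : x' = T t0 x := by simp [T, ht0def]
    have hcover : ∀ y : X, ∃ s, T s x = y := fun y => ⟨φ y - φ x, by simp [T]⟩
    have hper : ∀ t, f (T t x) = f (T (t + t0) x) := by
      intro t
      calc f (T t x) = f (T t x') := hall t x x' hfxx
      _ = f (T t (T t0 x)) := by rw [← hx']
      _ = f (T (t0 + t) x) := by rw [hTT]
      _ = f (T (t + t0) x) := by rw [add_comm]
    have hconstn : ∀ n : ℕ, f (T (n • t0) x) = f x := by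
      intro n
      induction n with
      | zero => rw [zero_nsmul, hT0]
      | succ n ih => rw [succ_nsmul, ← hper, ih]
    have hconst : ∀ y, f y = f x := by
      intro y
      obtain ⟨s, hs⟩ := hcover y
      obtain ⟨n, hn⟩ := hgen t0 ht0 s
      rw [← hs, ← hn, hconstn]
    rw [Nat.card_eq_one_iff_unique]
    refine ⟨⟨fun y1 y2 => ?_⟩, ⟨f x⟩⟩
    obtain ⟨z1, rfl⟩ := hsurj y1
    obtain ⟨z2, rfl⟩ := hsurj y2
    rw [hconst z1, hconst z2]

/-- A Lyubashenko solution on a finite set with at least 3 elements is simple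
iff, after identifying `X` with `ℤ/pℤ` for some prime `p`, the solution takes the form
`(x, y) ↦ (y + a, x + b)` with `(a, b) ≠ (0, 0)`. -/
theorem stmt_1 {X : Type} [Fintype X] (hX : 3 ≤ Fintype.card X)
    (lam rho : Equiv.Perm X) (hcomm : lam * rho = rho * lam)
    (r : X × X → X × X) (hr : ∀ x y : X, r (x, y) = (lam y, rho x)) :
    SimpleSolution X r ↔
      ∃ (p : ℕ), p.Prime ∧ ∃ (φ : X ≃ ZMod p) (a b : ZMod p), (a, b) ≠ (0, 0) ∧
        ∀ x y : X, Prod.map φ φ (r (x, y)) = (φ y + a, φ x + b) := by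
  constructor
  · intro hs
    exact forward_dir hX lam rho hcomm r hr hs
  · rintro ⟨p, hp, φ, a, b, hab, hform⟩
    exact reverse_dir hX lam rho r hr p hp φ a b hab hform
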